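/- arXiv:math-ph/0011015 — 4 statements merged into one kernel-verified Lean document; each statement's English description precedes it below -/
import Mathlib

section
/- Let γ : ℝ → ℝ² satisfy |γ(s) − γ(s')| ≤ |s − s'| for all s, s' ∈ ℝ, assumption (a1), and assumption (a2). Then for every R > 0 there exists a point x ∈ ℝ² whose distance from the curve exceeds R, i.e. |x − γ(s)| > R for all s ∈ ℝ; equivalently, there is a disc of radius R in the plane that does not intersect Γ = γ(ℝ). -/
/-!
A disc of radius `L` centred at `γ 0` can only meet the `R`-neighbourhood of the curve at points
`γ s` with `c |s| ≤ L + R`. By the Lipschitz bound, that part of the neighbourhood is covered by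
the `O(L / (c R))` discs of radius `2 R` centred at the grid points `γ (k R)`, whose total area
grows linearly in `L`. For large `L` they cannot cover the disc of radius `L`, and any uncovered
point is at distance more than `R` from the curve.
-/

open MeasureTheory Real

abbrev Plane := EuclideanSpace ℝ (Fin 2)

open Metric

theorem exists_mem_closedBall_forall_notMem_closedBall
    {E ι : Type*} [NormedAddCommGroup E] [NormedSpace ℝ E] [MeasurableSpace E] [BorelSpace E]
    [FiniteDimensional ℝ E] (μ : Measure E) [μ.IsAddHaarMeasure]
    (x₀ : E) {L r : ℝ} (hL : 0 ≤ L) (hr : 0 ≤ r) (s : Finset ι) (p : ι → E)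
    (hcard : (s.card : ℝ) * r ^ Module.finrank ℝ E < L ^ Module.finrank ℝ E) :
    ∃ x ∈ closedBall x₀ L, ∀ i ∈ s, x ∉ closedBall (p i) r := by
  by_contra! hcover
  set V := μ (ball 0 1)
  have hV0 : V ≠ 0 := (measure_ball_pos μ 0 one_pos).ne'
  have hVtop : V ≠ ⊤ := measure_ball_lt_top.ne
  have hsub : closedBall x₀ L ⊆ ⋃ i ∈ s, closedBall (p i) r := fun x hx ↦ by
    simpa using hcover x hx
  have hle : ENNReal.ofReal (L ^ Module.finrank ℝ E) * V
      ≤ ENNReal.ofReal (s.card * r ^ Module.finrank ℝ E) * V :=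
    calc ENNReal.ofReal (L ^ Module.finrank ℝ E) * V = μ (closedBall x₀ L) :=
          (μ.addHaar_closedBall x₀ hL).symm
      _ ≤ μ (⋃ i ∈ s, closedBall (p i) r) := measure_mono hsub
      _ ≤ ∑ i ∈ s, μ (closedBall (p i) r) := measure_biUnion_finset_le _ _
      _ = ENNReal.ofReal (s.card * r ^ Module.finrank ℝ E) * V := by
          simp only [μ.addHaar_closedBall _ hr, Finset.sum_const, nsmul_eq_mul, ← mul_assoc,
            ENNReal.ofReal_mul (Nat.cast_nonneg _), ENNReal.ofReal_natCast, V]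
  rw [ENNReal.mul_le_mul_iff_left hV0 hVtop, ENNReal.ofReal_le_ofReal_iff (by positivity)] at hle
  exact hle.not_gt hcard

theorem exists_int_mem_Icc_abs_sub_mul_le {R s : ℝ} (hR : 0 < R) {n : ℕ} (hs : |s| ≤ n * R) :
    ∃ k ∈ Finset.Icc (-(n : ℤ)) n, |s - k * R| ≤ R / 2 := by
  have hround := abs_sub_round (s / R)
  have hsR : |s / R| ≤ n := by rwa [abs_div, abs_of_pos hR, div_le_iff₀ hR]
  refine ⟨round (s / R), ?_, ?_⟩
  · have hk : |(round (s / R) : ℝ)| < n + 1 := by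
      linarith [abs_sub_abs_le_abs_sub (round (s / R) : ℝ) (s / R),
        abs_sub_comm (round (s / R) : ℝ) (s / R)]
    have hk_int : |round (s / R)| < (n : ℤ) + 1 := by exact_mod_cast hk
    rw [Finset.mem_Icc, ← abs_le]
    omega
  · calc |s - round (s / R) * R| = |s / R - round (s / R)| * R := by
          rw [← abs_of_pos hR, ← abs_mul, abs_of_pos hR, sub_mul, div_mul_cancel₀ _ hR.ne']
      _ ≤ 1 / 2 * R := by gcongr
      _ = R / 2 := by ring

theorem exists_add_mul_lt_sq (a b : ℝ) : ∃ L : ℝ, 0 ≤ L ∧ a * L + b < L ^ 2 := by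
  refine ⟨|a| + |b| + 1, by positivity, ?_⟩
  nlinarith [le_abs_self a, le_abs_self b, abs_nonneg a, abs_nonneg b]

theorem exists_card_Icc_mul_sq_lt_sq {R c : ℝ} (hR : 0 < R) (hc : 0 < c) :
    ∃ L : ℝ, 0 ≤ L ∧ ∃ n : ℕ,
      (L + R) / c ≤ n * R ∧ ((Finset.Icc (-(n : ℤ)) n).card : ℝ) * (2 * R) ^ 2 < L ^ 2 := by
  obtain ⟨L, hL0, hL⟩ := exists_add_mul_lt_sq (8 * R / c) (8 * R ^ 2 / c + 12 * R ^ 2)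
  set n := ⌈(L + R) / c / R⌉₊
  have hn : n * R < (L + R) / c + R := by
    have := Nat.ceil_lt_add_one (by positivity : 0 ≤ (L + R) / c / R)
    rwa [div_add_one hR.ne', lt_div_iff₀ hR] at this
  refine ⟨L, hL0, n, (div_le_iff₀ hR).1 (Nat.le_ceil _), ?_⟩
  rw [Int.card_Icc, show (n : ℤ) + 1 - -n = ((2 * n + 1 : ℕ) : ℤ) by push_cast; ring,
    Int.toNat_natCast]
  calc ((2 * n + 1 : ℕ) : ℝ) * (2 * R) ^ 2 = 8 * R * (n * R) + 4 * R ^ 2 := by push_cast; ring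
    _ < 8 * R * ((L + R) / c + R) + 4 * R ^ 2 := by gcongr
    _ = 8 * R / c * L + (8 * R ^ 2 / c + 12 * R ^ 2) := by field_simp; ring
    _ < L ^ 2 := hL

theorem exists_disc_avoiding_curve_general
    (γ : ℝ → Plane)
    (hLip : ∀ s s' : ℝ, ‖γ s - γ s'‖ ≤ |s - s'|)
    (c : ℝ) (hc0 : 0 < c)
    (ha1 : ∀ s s' : ℝ, c * |s - s'| ≤ ‖γ s - γ s'‖) :
    ∀ R : ℝ, 0 < R → ∃ x : Plane, ∀ s : ℝ, R < ‖x - γ s‖ := by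
  intro R hR
  obtain ⟨L, hL0, n, hn, hcount⟩ := exists_card_Icc_mul_sq_lt_sq hR hc0
  obtain ⟨x, hx, hfar⟩ := exists_mem_closedBall_forall_notMem_closedBall volume (γ 0) hL0
    (by positivity : 0 ≤ 2 * R) (Finset.Icc (-(n : ℤ)) n) (fun k ↦ γ (k * R))
    (by rwa [finrank_euclideanSpace_fin])
  refine ⟨x, fun s ↦ not_le.1 fun hs ↦ ?_⟩
  have hsn : |s| ≤ n * R := by
    have hγs : c * |s| ≤ L + R := by
      have := (ha1 s 0).trans (norm_sub_le_norm_sub_add_norm_sub (γ s) x (γ 0))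
      rw [sub_zero, norm_sub_rev] at this
      linarith [mem_closedBall_iff_norm.1 hx]
    exact ((le_div_iff₀' hc0).2 hγs).trans hn
  obtain ⟨k, hk, hks⟩ := exists_int_mem_Icc_abs_sub_mul_le hR hsn
  refine hfar k hk (mem_closedBall_iff_norm.2 ?_)
  calc ‖x - γ (k * R)‖ ≤ ‖x - γ s‖ + ‖γ s - γ (k * R)‖ := norm_sub_le_norm_sub_add_norm_sub _ _ _
    _ ≤ 2 * R := by linarith [(hLip s (k * R)).trans hks]

/-- **Existence of large discs avoiding the curve.** If `γ : ℝ → ℝ²` is 1-Lipschitz and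
satisfies (a1) and the asymptotic straightness assumption (a2), then for every `R > 0` there
is a point of the plane at distance greater than `R` from the whole curve `Γ = γ(ℝ)`;
i.e. there is a disc of radius `R` not intersecting `Γ`. -/
theorem exists_disc_avoiding_curve
    (γ : ℝ → Plane)
    (hLip : ∀ s s' : ℝ, ‖γ s - γ s'‖ ≤ |s - s'|)
    (c : ℝ) (hc0 : 0 < c) (hc1 : c < 1)
    (ha1 : ∀ s s' : ℝ, c * |s - s'| ≤ ‖γ s - γ s'‖)
    (d μ ω : ℝ) (hd : 0 < d) (hμ : 0 < μ) (hω0 : 0 < ω) (hω1 : ω < 1)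
    (ha2 : ∀ s s' : ℝ, ω < s / s' → s / s' < ω⁻¹ →
      1 - ‖γ s - γ s'‖ / |s - s'| ≤ d * (1 + |s + s'| ^ (2 * μ)) ^ (-(1 / 2) : ℝ)) :
    ∀ R : ℝ, 0 < R → ∃ x : Plane, ∀ s : ℝ, R < ‖x - γ s‖ :=
  exists_disc_avoiding_curve_general γ hLip c hc0 ha1
end

section
/- Let γ : ℝ → ℝ² satisfy |γ(s) − γ(s')| ≤ |s − s'| for all s, s' ∈ ℝ and assumption (a1) with constant c ∈ (0,1), and let κ > 0. Then there is a constant C > 0 such that for all s ≠ s': 0 ≤ K₀(κ |γ(s) − γ(s')|) − K₀(κ |s − s'|) ≤ C e^{−c κ |s − s'| / 2}. In particular the kernel D_κ(s,s') = K₀(κ|γ(s) − γ(s')|) − K₀(κ|s − s'|) is nonnegative and bounded. -/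
open MeasureTheory Real

/-- The Macdonald function `K₀` (modified Bessel function of the second kind, order zero),
`K₀(x) = ∫₀^∞ exp(−x cosh t) dt` for `x > 0`. -/
noncomputable def K0 (x : ℝ) : ℝ := ∫ t in Set.Ioi (0 : ℝ), Real.exp (-x * Real.cosh t)

/-!
Since `c|s − s'| ≤ |γ(s) − γ(s')| ≤ |s − s'|` and `K₀` is decreasing, the difference lies between
`0` and `K₀(cb) − K₀(b)` with `b = κ|s − s'|`. For `b ≤ 1` this is bounded by `−log c + 3`,
because `K₀(x) = −log x + O(1)` near `0` (split the integral at `t = −log x`, where `x cosh t`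
becomes of order one). For `b ≥ 1`, `K₀(cb) ≤ e^{−cb/2} K₀(cb/2) ≤ e^{−cb/2} K₀(c/2)`, since
`cosh t ≥ 1` lets half of the exponent be pulled out of the integral.
-/

open Set

lemma exp_div_two_le_cosh (t : ℝ) : exp t / 2 ≤ cosh t := by
  rw [cosh_eq]; linarith [exp_pos (-t)]

lemma cosh_le_exp {t : ℝ} (ht : 0 ≤ t) : cosh t ≤ exp t := by
  rw [cosh_eq]; linarith [exp_le_exp.2 (neg_le_self ht)]

lemma exp_neg_mul_cosh_le {y : ℝ} (hy : 0 < y) (t : ℝ) :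
    exp (-y * cosh t) ≤ 2 / y * exp (-t) := by
  have hu : 0 < y * cosh t := mul_pos hy (cosh_pos t)
  calc exp (-y * cosh t) = (exp (y * cosh t))⁻¹ := by rw [neg_mul, exp_neg]
    _ ≤ (y * cosh t)⁻¹ := inv_anti₀ hu (by linarith [add_one_le_exp (y * cosh t)])
    _ ≤ (y * (exp t / 2))⁻¹ :=
      inv_anti₀ (by positivity) (mul_le_mul_of_nonneg_left (exp_div_two_le_cosh t) hy.le)
    _ = 2 / y * exp (-t) := by rw [exp_neg]; field_simp

lemma K0_integrableOn {x : ℝ} (hx : 0 < x) :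
    IntegrableOn (fun t => exp (-x * cosh t)) (Ioi 0) :=
  ((integrableOn_exp_neg_Ioi 0).const_mul (2 / x)).mono' (by fun_prop) <|
    ae_of_all _ fun t => by
      rw [norm_of_nonneg (exp_pos _).le]; exact exp_neg_mul_cosh_le hx t

lemma K0_nonneg (x : ℝ) : 0 ≤ K0 x :=
  setIntegral_nonneg measurableSet_Ioi fun _ _ => (exp_pos _).le

lemma K0_antitoneOn : AntitoneOn K0 (Ioi 0) := fun x hx y _ hxy =>
  setIntegral_mono_on (K0_integrableOn (lt_of_lt_of_le hx hxy)) (K0_integrableOn hx)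
    measurableSet_Ioi fun t _ => exp_le_exp.2 (by nlinarith [one_le_cosh t])

lemma K0_le_exp_mul_K0_half {x : ℝ} (hx : 0 < x) : K0 x ≤ exp (-x / 2) * K0 (x / 2) := by
  rw [K0, K0, ← integral_const_mul]
  refine setIntegral_mono_on (K0_integrableOn hx) ((K0_integrableOn (half_pos hx)).const_mul _)
    measurableSet_Ioi fun t _ => ?_
  rw [← exp_add]
  exact exp_le_exp.2 (by nlinarith [one_le_cosh t])

lemma K0_le_neg_log_add_two {y : ℝ} (hy0 : 0 < y) (hy1 : y ≤ 1) : K0 y ≤ -log y + 2 := by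
  have hT : 0 ≤ -log y := neg_nonneg.2 (log_nonpos hy0.le hy1)
  have hint := K0_integrableOn hy0
  have hhead : ∫ t in (0)..(-log y), exp (-y * cosh t) ≤ -log y := by
    calc ∫ t in (0)..(-log y), exp (-y * cosh t) ≤ ∫ _ in (0)..(-log y), (1 : ℝ) :=
          intervalIntegral.integral_mono_on hT (Continuous.intervalIntegrable (by fun_prop) _ _)
            intervalIntegrable_const fun t _ =>
            exp_le_one_iff.2 (by nlinarith [cosh_pos t])
      _ = -log y := by simp
  have htail : ∫ t in Ioi (-log y), exp (-y * cosh t) ≤ 2 := by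
    calc ∫ t in Ioi (-log y), exp (-y * cosh t) ≤ ∫ t in Ioi (-log y), 2 / y * exp (-t) :=
          setIntegral_mono_on (hint.mono_set (Ioi_subset_Ioi hT))
            ((integrableOn_exp_neg_Ioi _).const_mul _) measurableSet_Ioi
            fun t _ => exp_neg_mul_cosh_le hy0 t
      _ = 2 := by
          rw [integral_const_mul, integral_exp_neg_Ioi, neg_neg, exp_log hy0]; field_simp
  rw [K0, ← intervalIntegral.integral_interval_add_Ioi hint (hint.mono_set (Ioi_subset_Ioi hT))]
  linarith

lemma neg_log_sub_one_le_K0 {x : ℝ} (hx0 : 0 < x) (hx1 : x ≤ 1) : -log x - 1 ≤ K0 x := by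
  have hT : 0 ≤ -log x := neg_nonneg.2 (log_nonpos hx0.le hx1)
  have hint := K0_integrableOn hx0
  calc -log x - 1 ≤ -log x - 1 + x := by linarith
    _ = ∫ t in (0)..(-log x), (1 - x * exp t) := by
        rw [intervalIntegral.integral_sub intervalIntegrable_const
          (Continuous.intervalIntegrable (by fun_prop) _ _),
          intervalIntegral.integral_const_mul, integral_exp, exp_neg, exp_log hx0]
        simp only [intervalIntegral.integral_const, smul_eq_mul, mul_one, sub_zero, exp_zero,
          mul_sub, mul_inv_cancel₀ hx0.ne']
        ring
    _ ≤ ∫ t in (0)..(-log x), exp (-x * cosh t) :=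
        intervalIntegral.integral_mono_on hT (Continuous.intervalIntegrable (by fun_prop) _ _)
          (Continuous.intervalIntegrable (by fun_prop) _ _) fun t ht =>
          (one_sub_le_exp_neg (x * exp t)).trans <|
            exp_le_exp.2 (by nlinarith [cosh_le_exp ht.1])
    _ ≤ K0 x := by
        rw [intervalIntegral.integral_of_le hT]
        exact setIntegral_mono_set hint (ae_of_all _ fun _ => (exp_pos _).le)
          Ioc_subset_Ioi_self.eventuallyLE

lemma K0_mul_sub_K0_le {c x : ℝ} (hc0 : 0 < c) (hc1 : c ≤ 1) (hx0 : 0 < x) (hx1 : x ≤ 1) :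
    K0 (c * x) - K0 x ≤ -log c + 3 := by
  have hupper := K0_le_neg_log_add_two (mul_pos hc0 hx0) (mul_le_one₀ hc1 hx0.le hx1)
  have hlower := neg_log_sub_one_le_K0 hx0 hx1
  rw [log_mul hc0.ne' hx0.ne'] at hupper
  linarith

lemma K0_mul_sub_K0_le_exp {c b : ℝ} (hc0 : 0 < c) (hc1 : c ≤ 1) (hb : 0 < b) :
    K0 (c * b) - K0 b ≤ ((-log c + 3) * exp (1 / 2) + K0 (c / 2)) * exp (-(c * b) / 2) := by
  have hexp := exp_pos (-(c * b) / 2)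
  have hK := mul_nonneg (K0_nonneg (c / 2)) hexp.le
  rcases le_or_gt b 1 with hb1 | hb1
  · have hdecay : exp (1 / 2) * exp (-(c * b) / 2) ≥ 1 := by
      rw [← exp_add]; exact one_le_exp (by nlinarith)
    have hlogc : 0 ≤ -log c + 3 := by linarith [log_nonpos hc0.le hc1]
    nlinarith [K0_mul_sub_K0_le hc0 hc1 hb hb1, mul_le_mul_of_nonneg_left hdecay hlogc]
  · have hcb := mul_pos hc0 hb
    have hhalf : K0 (c * b / 2) ≤ K0 (c / 2) :=
      K0_antitoneOn (half_pos hc0) (half_pos hcb) (by nlinarith)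
    have hlogc : 0 ≤ (-log c + 3) * exp (1 / 2) :=
      mul_nonneg (by linarith [log_nonpos hc0.le hc1]) (exp_pos _).le
    calc K0 (c * b) - K0 b ≤ exp (-(c * b) / 2) * K0 (c * b / 2) := by
          linarith [K0_le_exp_mul_K0_half hcb, K0_nonneg b]
      _ ≤ K0 (c / 2) * exp (-(c * b) / 2) := by nlinarith
      _ ≤ _ := by nlinarith

/-- **Pointwise bound on the kernel difference.** If `γ` is 1-Lipschitz and satisfies (a1)
with constant `c ∈ (0,1)`, then for `κ > 0` there is `C > 0` such that for all `s ≠ s'`,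
`0 ≤ K₀(κ|γ(s)−γ(s')|) − K₀(κ|s−s'|) ≤ C e^{−cκ|s−s'|/2}`; in particular the kernel
`D_κ` is nonnegative and bounded. -/
theorem kernel_difference_pointwise_bound
    (γ : ℝ → Plane)
    (hLip : ∀ s s' : ℝ, ‖γ s - γ s'‖ ≤ |s - s'|)
    (c : ℝ) (hc0 : 0 < c) (hc1 : c < 1)
    (ha1 : ∀ s s' : ℝ, c * |s - s'| ≤ ‖γ s - γ s'‖)
    (κ : ℝ) (hκ : 0 < κ) :
    ∃ C : ℝ, 0 < C ∧ ∀ s s' : ℝ, s ≠ s' →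
      0 ≤ K0 (κ * ‖γ s - γ s'‖) - K0 (κ * |s - s'|) ∧
      K0 (κ * ‖γ s - γ s'‖) - K0 (κ * |s - s'|) ≤ C * Real.exp (-c * κ * |s - s'| / 2) := by
  have hlogc : 0 ≤ -log c := neg_nonneg.2 (log_nonpos hc0.le hc1.le)
  refine ⟨(-log c + 3) * exp (1 / 2) + K0 (c / 2),
    add_pos_of_pos_of_nonneg (by positivity) (K0_nonneg _), fun s s' hss => ?_⟩
  have hb : 0 < κ * |s - s'| := mul_pos hκ (abs_pos.2 (sub_ne_zero.2 hss))
  have hcb : 0 < c * (κ * |s - s'|) := mul_pos hc0 hb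
  have hlower : c * (κ * |s - s'|) ≤ κ * ‖γ s - γ s'‖ := by
    rw [mul_left_comm]; exact mul_le_mul_of_nonneg_left (ha1 s s') hκ.le
  have hupper : κ * ‖γ s - γ s'‖ ≤ κ * |s - s'| := mul_le_mul_of_nonneg_left (hLip s s') hκ.le
  refine ⟨sub_nonneg.2 (K0_antitoneOn (hcb.trans_le hlower) hb hupper), ?_⟩
  calc K0 (κ * ‖γ s - γ s'‖) - K0 (κ * |s - s'|)
      ≤ K0 (c * (κ * |s - s'|)) - K0 (κ * |s - s'|) :=
        sub_le_sub_right (K0_antitoneOn hcb (hcb.trans_le hlower) hlower) _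
    _ ≤ _ := K0_mul_sub_K0_le_exp hc0 hc1.le hb
    _ = _ := by ring_nf
end

section
/- Fix κ > 0. For λ > 0 let g_λ(p) := (2πλ²)^{−1/2} e^{−p²/(2λ²)} (the square of the modulus of the Fourier transform of the normalized Gaussian ψ_λ(s) = (2λ²/π)^{1/4} e^{−λ² s²}). Then ∫_ℝ κ (p² + κ²)^{−1/2} g_λ(p) dp − 1 = −λ²/(2κ²) + O(λ³) as λ → 0+; that is, lim_{λ→0+} λ^{−2} ( ∫_ℝ κ (p² + κ²)^{−1/2} g_λ(p) dp − 1 ) = −1/(2κ²). -/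
/-!
Substituting `p = λu` turns the integral into `E[κ (λ²U² + κ²)^{-1/2}]` for a standard Gaussian `U`.
Since `κ (s + κ²)^{-1/2} - 1 = -s / (√(s + κ²) (κ + √(s + κ²)))`, the integrand minus one, divided
by `λ²`, is dominated by `U² / (2κ²)` and tends to `-U² / (2κ²)`; dominated convergence and
`E[U²] = 1` give the limit `-1 / (2κ²)`.
-/

open MeasureTheory ProbabilityTheory Real Filter Topology

section

variable {κ : ℝ}

lemma mul_rpow_neg_half_sub_one (hκ : 0 < κ) (x : ℝ) :
    κ * (x ^ 2 + κ ^ 2) ^ (-(1 / 2) : ℝ) - 1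
      = -x ^ 2 / (√(x ^ 2 + κ ^ 2) * (κ + √(x ^ 2 + κ ^ 2))) := by
  have hsq : √(x ^ 2 + κ ^ 2) ^ 2 = x ^ 2 + κ ^ 2 := sq_sqrt (by positivity)
  rw [rpow_neg (by positivity), ← sqrt_eq_rpow]
  field_simp
  linear_combination -hsq

lemma abs_mul_rpow_neg_half_sub_one_le (hκ : 0 < κ) (x : ℝ) :
    |κ * (x ^ 2 + κ ^ 2) ^ (-(1 / 2) : ℝ) - 1| ≤ x ^ 2 / (2 * κ ^ 2) := by
  have hκs : κ ≤ √(x ^ 2 + κ ^ 2) := le_sqrt_of_sq_le (by nlinarith)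
  rw [mul_rpow_neg_half_sub_one hκ, abs_div, abs_neg, abs_of_nonneg (sq_nonneg x),
    abs_of_pos (by positivity)]
  exact div_le_div_of_nonneg_left (sq_nonneg x) (by positivity) (by nlinarith)

lemma tendsto_mul_rpow_neg_half_sub_one_div_sq (hκ : 0 < κ) (u : ℝ) :
    Tendsto (fun l : ℝ => (κ * ((l * u) ^ 2 + κ ^ 2) ^ (-(1 / 2) : ℝ) - 1) / l ^ 2)
      (𝓝[≠] 0) (𝓝 (-u ^ 2 / (2 * κ ^ 2))) := by
  have hlim : Tendsto
      (fun l : ℝ => -u ^ 2 / (√((l * u) ^ 2 + κ ^ 2) * (κ + √((l * u) ^ 2 + κ ^ 2)))) (𝓝 0)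
      (𝓝 (-u ^ 2 / (2 * κ ^ 2))) := by
    have hcont : Continuous fun l : ℝ =>
        -u ^ 2 / (√((l * u) ^ 2 + κ ^ 2) * (κ + √((l * u) ^ 2 + κ ^ 2))) :=
      continuous_const.div (by fun_prop) fun l => by positivity
    convert hcont.tendsto 0 using 2
    rw [zero_mul, zero_pow two_ne_zero, zero_add, sqrt_sq hκ.le]
    ring
  refine (hlim.mono_left nhdsWithin_le_nhds).congr' ?_
  filter_upwards [self_mem_nhdsWithin] with l (hl : l ≠ 0)
  rw [mul_rpow_neg_half_sub_one hκ]
  field_simp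

lemma abs_mul_rpow_neg_half_sub_one_div_sq_le (hκ : 0 < κ) {l : ℝ} (hl : l ≠ 0) (x : ℝ) :
    |(κ * ((l * x) ^ 2 + κ ^ 2) ^ (-(1 / 2) : ℝ) - 1) / l ^ 2| ≤ x ^ 2 / (2 * κ ^ 2) := by
  have hl2 : 0 < l ^ 2 := by positivity
  rw [abs_div, abs_of_pos hl2, div_le_iff₀ hl2]
  calc _ ≤ (l * x) ^ 2 / (2 * κ ^ 2) := abs_mul_rpow_neg_half_sub_one_le hκ _
    _ = _ := by ring

theorem tendsto_integral_mul_rpow_neg_half_sub_one_div_sq (hκ : 0 < κ) {μ : Measure ℝ}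
    [IsProbabilityMeasure μ] (hμ : Integrable (fun x => x ^ 2) μ) :
    Tendsto (fun l : ℝ => ((∫ x, κ * ((l * x) ^ 2 + κ ^ 2) ^ (-(1 / 2) : ℝ) ∂μ) - 1) / l ^ 2)
      (𝓝[≠] 0) (𝓝 (-(∫ x, x ^ 2 ∂μ) / (2 * κ ^ 2))) := by
  have hcont (l : ℝ) : Continuous fun x : ℝ => κ * ((l * x) ^ 2 + κ ^ 2) ^ (-(1 / 2) : ℝ) :=
    continuous_const.mul <| (by fun_prop : Continuous fun x : ℝ => (l * x) ^ 2 + κ ^ 2).rpow_const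
      fun x => Or.inl (by positivity)
  have hint_sub (l : ℝ) :
      Integrable (fun x => κ * ((l * x) ^ 2 + κ ^ 2) ^ (-(1 / 2) : ℝ) - 1) μ := by
    refine (hμ.const_mul (l ^ 2 / (2 * κ ^ 2))).mono'
      ((hcont l).sub continuous_const).aestronglyMeasurable (ae_of_all _ fun x => ?_)
    calc _ ≤ (l * x) ^ 2 / (2 * κ ^ 2) := abs_mul_rpow_neg_half_sub_one_le hκ _
      _ = _ := by ring
  have hrw (l : ℝ) : ((∫ x, κ * ((l * x) ^ 2 + κ ^ 2) ^ (-(1 / 2) : ℝ) ∂μ) - 1) / l ^ 2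
      = ∫ x, (κ * ((l * x) ^ 2 + κ ^ 2) ^ (-(1 / 2) : ℝ) - 1) / l ^ 2 ∂μ := by
    have hint_f : Integrable (fun x => κ * ((l * x) ^ 2 + κ ^ 2) ^ (-(1 / 2) : ℝ)) μ :=
      ((hint_sub l).add (integrable_const 1)).congr (ae_of_all _ fun x => sub_add_cancel _ _)
    rw [integral_div, integral_sub hint_f (integrable_const 1), integral_const, probReal_univ,
      one_smul]
  simp_rw [hrw]
  have hlim : -(∫ x, x ^ 2 ∂μ) / (2 * κ ^ 2) = ∫ x, -x ^ 2 / (2 * κ ^ 2) ∂μ := by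
    rw [integral_div, integral_neg]
  rw [hlim]
  refine tendsto_integral_filter_of_dominated_convergence (fun x => x ^ 2 / (2 * κ ^ 2))
    (.of_forall fun l => (((hcont l).sub continuous_const).div_const _).aestronglyMeasurable)
    ?_ (hμ.div_const _) (ae_of_all _ (tendsto_mul_rpow_neg_half_sub_one_div_sq hκ))
  filter_upwards [self_mem_nhdsWithin] with l (hl : l ≠ 0)
  exact ae_of_all _ (abs_mul_rpow_neg_half_sub_one_div_sq_le hκ hl)

end

lemma integral_mul_gaussian_density_eq {l : ℝ} (hl : l ≠ 0) (f : ℝ → ℝ) :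
    ∫ p, f p * ((2 * π * l ^ 2) ^ (-(1 / 2) : ℝ) * exp (-p ^ 2 / (2 * l ^ 2)))
      = ∫ u, f (l * u) ∂gaussianReal 0 1 := by
  have hemb : MeasurableEmbedding (l * ·) := (Homeomorph.mulLeft₀ l hl).measurableEmbedding
  rw [← hemb.integral_map, gaussianReal_map_const_mul, mul_zero, mul_one,
    integral_gaussianReal_eq_integral_smul
    (by rw [ne_eq, ← NNReal.coe_eq_zero, NNReal.coe_mk]; positivity)]
  congr 1 with p
  rw [gaussianPDFReal, smul_eq_mul, mul_comm, sub_zero, NNReal.coe_mk, sqrt_eq_rpow,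
    ← rpow_neg (by positivity)]

lemma integral_sq_gaussianReal_zero_one : ∫ x, x ^ 2 ∂gaussianReal 0 1 = 1 := by
  rw [← variance_of_integral_eq_zero aemeasurable_id' integral_id_gaussianReal,
    variance_fun_id_gaussianReal, NNReal.coe_one]

/-- **Gaussian asymptotics of the straight-line quadratic form.** Fix `κ > 0` and let
`g_λ(p) = (2πλ²)^{−1/2} e^{−p²/(2λ²)}` be the Gaussian probability density (the squared
modulus of the Fourier transform of `ψ_λ(s) = (2λ²/π)^{1/4} e^{−λ²s²}`). Then
`∫ κ(p²+κ²)^{−1/2} g_λ(p) dp − 1 = −λ²/(2κ²) + O(λ³)` as `λ → 0+`, i.e.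
`λ^{−2}(∫ κ(p²+κ²)^{−1/2} g_λ(p) dp − 1) → −1/(2κ²)`. -/
theorem gaussian_form_asymptotics (κ : ℝ) (hκ : 0 < κ) :
    Filter.Tendsto
      (fun lam : ℝ =>
        ((∫ p : ℝ, κ * (p ^ 2 + κ ^ 2) ^ (-(1 / 2) : ℝ)
            * ((2 * π * lam ^ 2) ^ (-(1 / 2) : ℝ) * Real.exp (-p ^ 2 / (2 * lam ^ 2)))) - 1)
          / lam ^ 2)
      (nhdsWithin 0 (Set.Ioi (0 : ℝ))) (nhds (-1 / (2 * κ ^ 2))) := by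
  have h := tendsto_integral_mul_rpow_neg_half_sub_one_div_sq hκ
    ((memLp_id_gaussianReal (μ := 0) (v := 1) 2).integrable_sq)
  rw [integral_sq_gaussianReal_zero_one] at h
  refine (h.mono_left (nhdsWithin_mono _ fun l (hl : 0 < l) => hl.ne')).congr' ?_
  filter_upwards [self_mem_nhdsWithin] with l (hl : 0 < l)
  rw [integral_mul_gaussian_density_eq hl.ne']
end

section
/- Let γ : ℝ → ℝ² be a C² curve parametrized by arc length, i.e. |γ'(s)| = 1 for all s, and let k(s) := γ₁'(s) γ₂''(s) − γ₂'(s) γ₁''(s) denote its signed curvature. Then for all s' < s: |γ(s) − γ(s')| ≥ ∫_{s'}^{s} [ 1 − (1/2) ( ∫_{s'}^{s₁} k(s₂) ds₂ )² ] ds₁, and consequently 1 − |γ(s) − γ(s')| / |s − s'| ≤ (1/(2|s − s'|)) ∫_{s'}^{s} ( ∫_{s'}^{s₁} k(s₂) ds₂ )² ds₁. -/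
open MeasureTheory Real intervalIntegral

/-- The signed curvature `k(s) = γ₁'(s)γ₂''(s) − γ₂'(s)γ₁''(s)` of a plane curve. -/
noncomputable def signedCurvature (γ : ℝ → Plane) (s : ℝ) : ℝ :=
  deriv (fun t => γ t 0) s * deriv (deriv (fun t => γ t 1)) s
    - deriv (fun t => γ t 1) s * deriv (deriv (fun t => γ t 0)) s

open scoped RealInnerProductSpace

/-! Write the unit tangent as `T = (a, b)`. Differentiating `a² + b² = 1` shows `T' ⊥ T`, which
gives the Frenet equations `a' = -k b`, `b' = k a`. Hence `T t` is `T s'` rotated by the angle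
`θ t = ∫_{s'}^t k`, so `⟪T t, T s'⟫ = cos (θ t)`. Integrating,
`⟪γ s - γ s', T s'⟫ = ∫_{s'}^s cos θ ≥ ∫_{s'}^s (1 - θ² / 2)`, while the left side is at most
`‖γ s - γ s'‖` by Cauchy–Schwarz. Dividing by `s - s'` gives the second inequality. -/

section UnitCircle

variable {a b φ : ℝ → ℝ}

theorem deriv_eq_of_sq_add_sq_eq_one (ha : Differentiable ℝ a) (hb : Differentiable ℝ b)
    (hunit : ∀ t, a t ^ 2 + b t ^ 2 = 1) (t : ℝ) :
    deriv a t = -(a t * deriv b t - b t * deriv a t) * b t ∧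
      deriv b t = (a t * deriv b t - b t * deriv a t) * a t := by
  have horth : a t * deriv a t + b t * deriv b t = 0 := by
    have hconst : HasDerivAt (fun t => a t ^ 2 + b t ^ 2) 0 t := by
      simpa only [hunit] using hasDerivAt_const t (1 : ℝ)
    have := (((ha t).hasDerivAt.pow 2).add ((hb t).hasDerivAt.pow 2)).unique hconst
    norm_num at this
    linarith
  constructor
  · linear_combination a t * horth - deriv a t * hunit t
  · linear_combination b t * horth - deriv b t * hunit t

theorem eq_rotation_of_hasDerivAt (ha : Differentiable ℝ a) (hb : Differentiable ℝ b)
    (hunit : ∀ t, a t ^ 2 + b t ^ 2 = 1)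
    (hφ : ∀ t, HasDerivAt φ (a t * deriv b t - b t * deriv a t) t) (t₀ t : ℝ) :
    a t = a t₀ * cos (φ t - φ t₀) - b t₀ * sin (φ t - φ t₀) ∧
      b t = a t₀ * sin (φ t - φ t₀) + b t₀ * cos (φ t - φ t₀) := by
  let k t := a t * deriv b t - b t * deriv a t
  let c t := a t₀ * cos (φ t - φ t₀) - b t₀ * sin (φ t - φ t₀)
  let d t := a t₀ * sin (φ t - φ t₀) + b t₀ * cos (φ t - φ t₀)
  have hθ t : HasDerivAt (fun t => φ t - φ t₀) (k t) t := (hφ t).sub_const (φ t₀)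
  have hc t : HasDerivAt c (-k t * d t) t :=
    ((((hθ t).cos).const_mul (a t₀)).sub (((hθ t).sin).const_mul (b t₀))).congr_deriv
      (by ring)
  have hd t : HasDerivAt d (k t * c t) t :=
    ((((hθ t).sin).const_mul (a t₀)).add (((hθ t).cos).const_mul (b t₀))).congr_deriv
      (by ring)
  -- `(c, d)` is the initial vector rotated by `φ t - φ t₀`; it obeys the same Frenet
  -- equations as `(a, b)`, so its squared distance to `(a, b)` is constant.
  let H t := (a t - c t) ^ 2 + (b t - d t) ^ 2
  have hH t : HasDerivAt H 0 t := by
    obtain ⟨hda, hdb⟩ : deriv a t = -k t * b t ∧ deriv b t = k t * a t :=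
      deriv_eq_of_sq_add_sq_eq_one ha hb hunit t
    refine ((((ha t).hasDerivAt.sub (hc t)).pow 2).add
      (((hb t).hasDerivAt.sub (hd t)).pow 2)).congr_deriv ?_
    simp only [hda, hdb, Pi.sub_apply]
    ring
  have hH0 : H t = 0 := by
    rw [is_const_of_deriv_eq_zero (fun t => (hH t).differentiableAt) (fun t => (hH t).deriv) t t₀]
    simp [H, c, d]
  constructor <;> nlinarith [sq_nonneg (a t - c t), sq_nonneg (b t - d t)]

end UnitCircle

theorem integral_inner_deriv_le_norm_sub {E : Type*} [NormedAddCommGroup E]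
    [InnerProductSpace ℝ E] {γ : ℝ → E} (hγ : ContDiff ℝ 1 γ) {u : E} (hu : ‖u‖ = 1)
    (a b : ℝ) : ∫ t in a..b, ⟪deriv γ t, u⟫ ≤ ‖γ b - γ a‖ :=
  calc ∫ t in a..b, ⟪deriv γ t, u⟫ = ⟪γ b, u⟫ - ⟪γ a, u⟫ :=
        integral_eq_sub_of_hasDerivAt
          (fun t _ => by
            simpa using (hγ.differentiable one_ne_zero t).hasDerivAt.inner ℝ (hasDerivAt_const t u))
          ((hγ.continuous_deriv_one.inner continuous_const).intervalIntegrable _ _)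
    _ = ⟪γ b - γ a, u⟫ := (inner_sub_left _ _ _).symm
    _ ≤ ‖γ b - γ a‖ * ‖u‖ := real_inner_le_norm _ _
    _ = ‖γ b - γ a‖ := by rw [hu, mul_one]

theorem deriv_euclideanSpace_apply {ι : Type*} [Fintype ι] {γ : ℝ → EuclideanSpace ℝ ι}
    {t : ℝ} (hγ : DifferentiableAt ℝ γ t) (i : ι) :
    deriv (fun u => γ u i) t = deriv γ t i :=
  ((EuclideanSpace.proj i : EuclideanSpace ℝ ι →L[ℝ] ℝ).hasFDerivAt.comp_hasDerivAt t
    hγ.hasDerivAt).deriv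

theorem contDiff_deriv_apply_of_contDiff_two {γ : ℝ → Plane} (hγ : ContDiff ℝ 2 γ)
    (i : Fin 2) : ContDiff ℝ 1 (deriv fun t => γ t i) :=
  ((EuclideanSpace.proj i : Plane →L[ℝ] ℝ).contDiff.comp hγ).deriv' (n := 1)

theorem continuous_signedCurvature {γ : ℝ → Plane} (hγ : ContDiff ℝ 2 γ) :
    Continuous (signedCurvature γ) := by
  have h0 := contDiff_deriv_apply_of_contDiff_two hγ 0
  have h1 := contDiff_deriv_apply_of_contDiff_two hγ 1
  exact (h0.continuous.mul h1.continuous_deriv_one).sub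
    (h1.continuous.mul h0.continuous_deriv_one)

theorem continuous_integral_signedCurvature {γ : ℝ → Plane} (hγ : ContDiff ℝ 2 γ) (s' : ℝ) :
    Continuous fun s₁ => ∫ s₂ in s'..s₁, signedCurvature γ s₂ :=
  continuous_primitive (fun _ _ => (continuous_signedCurvature hγ).intervalIntegrable _ _) s'

theorem inner_deriv_eq_cos_integral_signedCurvature {γ : ℝ → Plane} (hγ : ContDiff ℝ 2 γ)
    (hunit : ∀ s, ‖deriv γ s‖ = 1) (t₀ t : ℝ) :
    ⟪deriv γ t, deriv γ t₀⟫ = cos (∫ s in t₀..t, signedCurvature γ s) := by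
  have hT t i : deriv (fun u => γ u i) t = deriv γ t i :=
    deriv_euclideanSpace_apply (hγ.differentiable two_ne_zero t) i
  have hunit' t : deriv γ t 0 ^ 2 + deriv γ t 1 ^ 2 = 1 := by
    simpa [hunit, Fin.sum_univ_two] using (EuclideanSpace.real_norm_sq_eq (deriv γ t)).symm
  obtain ⟨hat, hbt⟩ := eq_rotation_of_hasDerivAt
    ((contDiff_deriv_apply_of_contDiff_two hγ 0).differentiable one_ne_zero)
    ((contDiff_deriv_apply_of_contDiff_two hγ 1).differentiable one_ne_zero)
    (by simpa only [hT] using hunit')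
    (fun t => ((continuous_signedCurvature hγ).integral_hasStrictDerivAt t₀ t).hasDerivAt) t₀ t
  simp only [hT, intervalIntegral.integral_same, sub_zero] at hat hbt
  simp only [PiLp.inner_apply, Fin.sum_univ_two, RCLike.inner_apply, conj_trivial, hat, hbt]
  linear_combination cos (∫ s in t₀..t, signedCurvature γ s) * hunit' t₀

theorem integral_one_sub_half_sq_integral_signedCurvature_le_norm_sub {γ : ℝ → Plane}
    (hγ : ContDiff ℝ 2 γ) (hunit : ∀ s, ‖deriv γ s‖ = 1) {s s' : ℝ} (hss' : s' ≤ s) :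
    ∫ s₁ in s'..s, (1 - 1 / 2 * (∫ s₂ in s'..s₁, signedCurvature γ s₂) ^ 2)
      ≤ ‖γ s - γ s'‖ := by
  set θ := fun s₁ => ∫ s₂ in s'..s₁, signedCurvature γ s₂
  have hθ : Continuous θ := continuous_integral_signedCurvature hγ s'
  calc ∫ s₁ in s'..s, (1 - 1 / 2 * θ s₁ ^ 2)
      ≤ ∫ s₁ in s'..s, cos (θ s₁) :=
        integral_mono_on hss' ((by fun_prop : Continuous _).intervalIntegrable _ _)
          ((continuous_cos.comp hθ).intervalIntegrable _ _) fun x _ => by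
            linarith [one_sub_sq_div_two_le_cos (x := θ x)]
    _ = ∫ s₁ in s'..s, ⟪deriv γ s₁, deriv γ s'⟫ :=
        integral_congr fun x _ => (inner_deriv_eq_cos_integral_signedCurvature hγ hunit s' x).symm
    _ ≤ ‖γ s - γ s'‖ := integral_inner_deriv_le_norm_sub (hγ.of_le one_le_two) (hunit s') s' s

/-- **Chord-length estimate via curvature.** For a `C²` unit-speed plane curve `γ` with
signed curvature `k`, for all `s' < s`:
`|γ(s) − γ(s')| ≥ ∫_{s'}^{s} [1 − ½(∫_{s'}^{s₁} k)²] ds₁` and consequently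
`1 − |γ(s)−γ(s')|/|s−s'| ≤ (1/(2|s−s'|)) ∫_{s'}^{s} (∫_{s'}^{s₁} k)² ds₁`. -/
theorem chord_length_curvature_estimate
    (γ : ℝ → Plane) (hγ : ContDiff ℝ 2 γ)
    (hunit : ∀ s : ℝ, ‖deriv γ s‖ = 1)
    (s s' : ℝ) (hss' : s' < s) :
    (∫ s₁ in s'..s,
        (1 - (1 / 2) * (∫ s₂ in s'..s₁, signedCurvature γ s₂) ^ 2)) ≤ ‖γ s - γ s'‖ ∧
    1 - ‖γ s - γ s'‖ / |s - s'|
      ≤ (1 / (2 * |s - s'|))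
          * ∫ s₁ in s'..s, (∫ s₂ in s'..s₁, signedCurvature γ s₂) ^ 2 := by
  have hchord :=
    integral_one_sub_half_sq_integral_signedCurvature_le_norm_sub hγ hunit hss'.le
  refine ⟨hchord, ?_⟩
  set θ := fun s₁ => ∫ s₂ in s'..s₁, signedCurvature γ s₂
  have hθ : Continuous θ := continuous_integral_signedCurvature hγ s'
  rw [integral_sub (f := fun _ => (1 : ℝ)) (g := fun x => 1 / 2 * θ x ^ 2)
    intervalIntegrable_const (((hθ.pow 2).const_mul _).intervalIntegrable _ _),
    intervalIntegral.integral_const_mul, integral_one] at hchord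
  have hlen : 0 < s - s' := sub_pos.mpr hss'
  rw [abs_of_pos hlen]
  calc 1 - ‖γ s - γ s'‖ / (s - s') = (s - s' - ‖γ s - γ s'‖) / (s - s') := by field_simp
    _ ≤ (1 / 2 * ∫ s₁ in s'..s, θ s₁ ^ 2) / (s - s') := by gcongr; linarith
    _ = _ := by field_simp; rfl
end
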